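/- Let ρ : [0,a] → [δ,1] with δ > 0, and let u₀,…,u_k be the first k+1 Neumann eigenfunctions of -(ρu')' = μρu on (0,a). Suppose g : [0,a] → ℝ is bounded, changes sign at most at j ≤ k-1 points y₁,…,y_j and is not ρ-a.e. zero. If U = Σ_{i=0}^{j} α_i u_i is a nonzero linear combination vanishing exactly at y₁,…,y_j and changing sign at each, then ∫₀^a ρ g U dx ≠ 0. In particular g cannot be ρ-orthogonal to all of u₀,…,u_{j}. -/

import Mathlib

open MeasureTheory Set ENNReal Real

/-- The indicator of a set, as a linear map on real-valued functions. -/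
noncomputable def indicatorL {α : Type*} (s : Set α) : (α → ℝ) →ₗ[ℝ] (α → ℝ) where
  toFun f := s.indicator f
  map_add' f g := by ext x; by_cases h : x ∈ s <;> simp [Set.indicator_apply, h]
  map_smul' c f := by ext x; by_cases h : x ∈ s <;> simp [Set.indicator_apply, h]

/-- The `k`-th min-max eigenvalue of the Sturm-Liouville problem
`-(ρ₁ u')' = μ ρ₂ u` with Neumann conditions on the interval `(α, β)`:
the infimum, over subspaces of `C¹` functions whose restriction to `(α,β)` is
`(k+1)`-dimensional, of the maximum of the Rayleigh quotient
`(∫_α^β ρ₁ u'²)/(∫_α^β ρ₂ u²)` over nonzero elements. -/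
noncomputable def muSL (k : ℕ) (α β : ℝ) (ρ₁ ρ₂ : ℝ → ℝ) : ℝ≥0∞ :=
  ⨅ V : {V : Submodule ℝ (ℝ → ℝ) //
      (∀ u ∈ V, ContDiff ℝ 1 u) ∧
      Module.finrank ℝ (V.map (indicatorL (Set.Ioo α β))) = k + 1},
    ⨆ u : {u : ℝ → ℝ // u ∈ V.1 ∧ indicatorL (Set.Ioo α β) u ≠ 0},
    ENNReal.ofReal ((∫ x in Set.Ioo α β, ρ₁ x * (deriv u.1 x) ^ 2) /
      (∫ x in Set.Ioo α β, ρ₂ x * (u.1 x) ^ 2))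

/-- The key uniqueness argument via the extended Courant nodal property: let
`u₀ = 1, u₁, …, u_k` be the first Neumann eigenfunctions of `-(ρu')' = μρu` on `(0,a)`
with `ρ : [0,a] → [δ,1]`. Let `g` be bounded and measurable, changing sign at most at
the `j ≤ k-1` points `y₁ < … < y_j` (encoded by the alternating sign pattern), not
`ρ`-a.e. zero, and let `U = ∑ αᵢ uᵢ` (`i ≤ j`) be a nonzero combination vanishing
exactly at the `yᵢ` and changing sign at each (same alternating pattern). Then
`∫ ρ g U ≠ 0`; in particular `g` cannot be `ρ`-orthogonal to all of `u₀, …, u_j`. -/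
theorem stmt_18 (a δ : ℝ) (ha : 0 < a) (hδ : 0 < δ) (ρ : ℝ → ℝ) (hρm : Measurable ρ)
    (hρ : ∀ x ∈ Set.Icc 0 a, δ ≤ ρ x ∧ ρ x ≤ 1)
    (k j : ℕ) (hk : 1 ≤ k) (hjk : j + 1 ≤ k)
    (u : ℕ → ℝ → ℝ) (hu0 : u 0 = fun _ => 1)
    (hureg : ∀ i ≤ k, ContDiff ℝ 1 (u i))
    (hueig : ∀ i ≤ k, (∀ x ∈ Set.Ioo 0 a,
        HasDerivAt (fun z => ρ z * deriv (u i) z)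
          (-((muSL i 0 a ρ ρ).toReal * ρ x * u i x)) x) ∧
      deriv (u i) 0 = 0 ∧ deriv (u i) a = 0)
    (y : Fin j → ℝ) (hy : StrictMono y) (hyin : ∀ i, y i ∈ Set.Ioo 0 a)
    (g : ℝ → ℝ) (hgm : Measurable g) (hgb : ∃ C, ∀ x, |g x| ≤ C)
    (εg : ℝ) (hεg : εg = 1 ∨ εg = -1)
    (hgsign : ∀ x ∈ Set.Icc 0 a,
      0 ≤ εg * (-1 : ℝ) ^ ((Finset.univ.filter fun i => y i < x).card) * g x)
    (hgne : ¬ (∀ᵐ x ∂(volume.restrict (Set.Ioo 0 a)), g x = 0))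
    (α : Fin (j + 1) → ℝ) (U : ℝ → ℝ) (hU : U = fun x => ∑ i, α i * u i x)
    (hUne : ∃ x ∈ Set.Icc 0 a, U x ≠ 0)
    (hUzero : ∀ x ∈ Set.Icc 0 a, (U x = 0 ↔ ∃ i, y i = x))
    (εU : ℝ) (hεU : εU = 1 ∨ εU = -1)
    (hUsign : ∀ x ∈ Set.Icc 0 a,
      0 ≤ εU * (-1 : ℝ) ^ ((Finset.univ.filter fun i => y i < x).card) * U x) :
    (∫ x in Set.Ioo 0 a, ρ x * g x * U x) ≠ 0 ∧
    ¬ (∀ i ≤ j, (∫ x in Set.Ioo 0 a, ρ x * g x * u i x) = 0) := by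

  -- continuity of U
  have hUcont : Continuous U := by
    rw [hU]
    refine continuous_finset_sum _ fun i _ => Continuous.mul continuous_const ?_
    exact (hureg i (le_trans (Nat.le_of_lt_succ i.isLt) (by omega))).continuous
  obtain ⟨Cg, hCg⟩ := hgb
  obtain ⟨CU, hCU⟩ := isCompact_Icc.exists_bound_of_continuousOn
    (hUcont.continuousOn (s := Set.Icc 0 a))
  have hCg0 : 0 ≤ Cg := le_trans (abs_nonneg _) (hCg 0)
  have hρabs : ∀ x ∈ Set.Icc 0 a, |ρ x| ≤ 1 := fun x hx => by
    have := hρ x hx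
    rw [abs_of_nonneg (le_trans hδ.le this.1)]; exact this.2
  have hvol : volume (Set.Ioo (0:ℝ) a) ≠ ⊤ := by
    simp [Real.volume_Ioo]
  -- integrability helper
  have key : ∀ (h : ℝ → ℝ), Continuous h →
      IntegrableOn (fun x => ρ x * g x * h x) (Set.Ioo 0 a) := by
    intro h hc
    obtain ⟨Ch, hCh⟩ := isCompact_Icc.exists_bound_of_continuousOn
      (hc.continuousOn (s := Set.Icc 0 a))
    refine Measure.integrableOn_of_bounded (M := 1 * Cg * Ch) hvol
      ((hρm.mul hgm).mul hc.measurable).aestronglyMeasurable ?_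
    filter_upwards [ae_restrict_mem measurableSet_Ioo] with x hx
    have hx' : x ∈ Set.Icc 0 a := Set.Ioo_subset_Icc_self hx
    calc ‖ρ x * g x * h x‖ = |ρ x| * |g x| * |h x| := by
          simp [abs_mul]
      _ ≤ 1 * Cg * Ch := by
          have hCh' : |h x| ≤ Ch := by simpa [Real.norm_eq_abs] using hCh x hx'
          have h1 : |ρ x| * |g x| ≤ 1 * Cg :=
            mul_le_mul (hρabs x hx') (hCg x) (abs_nonneg _) zero_le_one
          exact mul_le_mul h1 hCh' (abs_nonneg _) (by simpa using hCg0)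
  have hint : IntegrableOn (fun x => ρ x * g x * U x) (Set.Ioo 0 a) := key U hUcont
  have hεg2 : εg * εg = 1 := by rcases hεg with h | h <;> rw [h] <;> norm_num
  have hεU2 : εU * εU = 1 := by rcases hεU with h | h <;> rw [h] <;> norm_num
  have hεgne : εg ≠ 0 := by rcases hεg with h | h <;> rw [h] <;> norm_num
  have hεUne : εU ≠ 0 := by rcases hεU with h | h <;> rw [h] <;> norm_num
  set F : ℝ → ℝ := fun x => εg * εU * (ρ x * g x * U x) with hF
  -- F is nonnegative on Icc
  have hFnn : ∀ x ∈ Set.Icc 0 a, 0 ≤ F x := by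
    intro x hx
    have h1 := hgsign x hx
    have h2 := hUsign x hx
    have hρx : (0:ℝ) ≤ ρ x := le_trans hδ.le (hρ x hx).1
    have hprod := mul_nonneg (mul_nonneg h1 h2) hρx
    set c : ℝ := (-1 : ℝ) ^ ((Finset.univ.filter fun i => y i < x).card) with hc
    have hc2 : c * c = 1 := by
      rw [hc, ← pow_add]
      exact Even.neg_one_pow ⟨_, rfl⟩
    have : εg * c * g x * (εU * c * U x) * ρ x =
        (c * c) * (εg * εU * (ρ x * g x * U x)) := by ring
    rw [this, hc2, one_mul] at hprod
    exact hprod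
  have hFint : IntegrableOn F (Set.Ioo 0 a) := by
    exact hint.const_mul (εg * εU)
  -- positivity of ∫ F
  have hFpos : 0 < ∫ x in Set.Ioo 0 a, F x := by
    have hnn : 0 ≤ᵐ[volume.restrict (Set.Ioo 0 a)] F := by
      filter_upwards [ae_restrict_mem measurableSet_Ioo] with x hx
      exact hFnn x (Set.Ioo_subset_Icc_self hx)
    rw [setIntegral_pos_iff_support_of_nonneg_ae hnn hFint]
    · -- measure of support positive
      by_contra hsupp
      push_neg at hsupp
      have hsupp0 : volume (Function.support F ∩ Set.Ioo 0 a) = 0 :=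
        le_antisymm (by simpa using hsupp) (zero_le)
      have hae : ∀ᵐ x ∂(volume.restrict (Set.Ioo 0 a)), F x = 0 := by
        rw [ae_iff]
        rw [Measure.restrict_apply' measurableSet_Ioo]
        exact hsupp0
      have hrange : ∀ᵐ x ∂(volume.restrict (Set.Ioo 0 a)), x ∉ Set.range y := by
        rw [ae_iff]
        refine measure_mono_null (fun x hx => ?_) ((Set.finite_range y).measure_zero _)
        simpa using hx
      apply hgne
      filter_upwards [hae, hrange, ae_restrict_mem measurableSet_Ioo] with x hFx hry hx
      have hx' : x ∈ Set.Icc 0 a := Set.Ioo_subset_Icc_self hx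
      have hρne : ρ x ≠ 0 := ne_of_gt (lt_of_lt_of_le hδ (hρ x hx').1)
      have hUne : U x ≠ 0 := by
        intro h0
        obtain ⟨i, hi⟩ := (hUzero x hx').1 h0
        exact hry ⟨i, hi⟩
      have : εg * εU * (ρ x * g x * U x) = 0 := hFx
      rcases mul_eq_zero.1 this with h | h
      · exact absurd h (mul_ne_zero hεgne hεUne)
      · rcases mul_eq_zero.1 h with h | h
        · rcases mul_eq_zero.1 h with h | h
          · exact absurd h hρne
          · exact h
        · exact absurd h hUne
  have hIF : (∫ x in Set.Ioo 0 a, F x) =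
      εg * εU * ∫ x in Set.Ioo 0 a, ρ x * g x * U x := by
    rw [← integral_const_mul]
  have hIne : (∫ x in Set.Ioo 0 a, ρ x * g x * U x) ≠ 0 := by
    intro h0
    rw [hIF, h0, mul_zero] at hFpos
    exact lt_irrefl _ hFpos
  refine ⟨hIne, fun hall => hIne ?_⟩
  -- expand U
  have hexp : (∫ x in Set.Ioo 0 a, ρ x * g x * U x) =
      ∑ i : Fin (j + 1), α i * ∫ x in Set.Ioo 0 a, ρ x * g x * u i x := by
    have h1 : ∀ x, ρ x * g x * U x = ∑ i : Fin (j + 1), α i * (ρ x * g x * u i x) := by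
      intro x
      rw [hU]
      rw [Finset.mul_sum]
      exact Finset.sum_congr rfl fun i _ => by ring
    simp_rw [h1]
    rw [integral_finset_sum]
    · exact Finset.sum_congr rfl fun i _ => integral_const_mul _ _
    · intro i _
      exact ((key (u i) (hureg i (le_trans (Nat.le_of_lt_succ i.isLt) (by omega))).continuous).const_mul _)
  rw [hexp]
  refine Finset.sum_eq_zero fun i _ => ?_
  rw [hall i (Nat.le_of_lt_succ i.isLt), mul_zero]
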